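/- arXiv:2001.09144 — 5 statements merged into one kernel-verified Lean document; each statement's English description precedes it below -/
import Mathlib

section
/- Let W be a finite subgroup of GL_n(ℚ) and χ : W → K* a group morphism with χ(A)² = 1 for all A ∈ W. Let S be a symmetric matrix with A^T S A = S for all A ∈ W. Then for any ξ ∈ K* and all α, β ∈ ℤⁿ, the generalized orbit polynomial Θ^χ_α(x) = Σ_{B∈W} χ(B)^{-1} x^{Bα} satisfies the commutation property Θ^χ_α(ξ^{β^T S}) = Θ^χ_β(ξ^{α^T S}), where ξ^{β^T S} denotes the point whose i-th coordinate is ξ raised to the i-th entry of β^T S. -/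
open Matrix

private lemma rpow_sum' {ι : Type*} {ξ : ℝ} (hξ : 0 < ξ) (s : Finset ι) (c : ι → ℝ) :
    ξ ^ (∑ i ∈ s, c i) = ∏ i ∈ s, ξ ^ c i := by
  induction s using Finset.cons_induction with
  | empty => simp
  | cons a s ha ih => simp [Real.rpow_add hξ, ih]

private lemma key_dot {n : ℕ} (S A : Matrix (Fin n) (Fin n) ℚ) (hA : IsUnit A.det)
    (hS : Aᵀ * S * A = S) (hsymm : S.IsSymm) (α β : Fin n → ℚ) :
    Matrix.vecMul β S ⬝ᵥ A⁻¹.mulVec α = Matrix.vecMul α S ⬝ᵥ A.mulVec β := by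
  have h1 : S * A⁻¹ = Aᵀ * S := by
    conv_lhs => rw [← hS]
    rw [Matrix.mul_assoc, Matrix.mul_nonsing_inv _ hA, Matrix.mul_one]
  rw [Matrix.dotProduct_mulVec, Matrix.vecMul_vecMul, h1, ← Matrix.vecMul_vecMul,
    Matrix.vecMul_transpose]
  rw [dotProduct_comm, ← Matrix.mulVec_transpose, hsymm.eq, Matrix.dotProduct_mulVec]


/-- Commutation property: let `W` be a finite subgroup of `GL_n(ℚ)`, `χ : W → ℝ*` a group
morphism with `χ(A)² = 1`, and `S` a symmetric matrix with `Aᵀ S A = S` for all `A ∈ W`.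
For `ξ > 0` and all `α, β ∈ ℚⁿ`, the generalized orbit polynomial
`Θ^χ_α(x) = ∑_{B ∈ W} χ(B)⁻¹ x^(Bα)`, evaluated at the point `ξ^(βᵀS)` whose `i`-th
coordinate is `ξ` raised to the `i`-th entry of `βᵀS`, satisfies
`Θ^χ_α(ξ^(βᵀS)) = Θ^χ_β(ξ^(αᵀS))`. -/
theorem orbit_poly_commutation {n : ℕ} (W : Subgroup (GL (Fin n) ℚ)) [Fintype W]
    (χ : W →* ℝ) (hχ : ∀ A : W, χ A ^ 2 = 1)
    (S : Matrix (Fin n) (Fin n) ℚ) (hSsymm : S.IsSymm)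
    (hS : ∀ A : W, ((A : GL (Fin n) ℚ) : Matrix (Fin n) (Fin n) ℚ)ᵀ * S *
      ((A : GL (Fin n) ℚ) : Matrix (Fin n) (Fin n) ℚ) = S)
    (ξ : ℝ) (hξ : 0 < ξ) (α β : Fin n → ℚ) :
    (∑ B : W, (χ B)⁻¹ * ∏ i, (ξ ^ ((Matrix.vecMul β S i : ℚ) : ℝ)) ^
        (((((B : GL (Fin n) ℚ) : Matrix (Fin n) (Fin n) ℚ).mulVec α) i : ℝ))) =
    (∑ B : W, (χ B)⁻¹ * ∏ i, (ξ ^ ((Matrix.vecMul α S i : ℚ) : ℝ)) ^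
        (((((B : GL (Fin n) ℚ) : Matrix (Fin n) (Fin n) ℚ).mulVec β) i : ℝ))) := by
  have hterm : ∀ (M : Matrix (Fin n) (Fin n) ℚ) (γ δ : Fin n → ℚ),
      (∏ i, (ξ ^ ((Matrix.vecMul γ S i : ℚ) : ℝ)) ^ ((M.mulVec δ i : ℚ) : ℝ)) =
      ξ ^ (((Matrix.vecMul γ S ⬝ᵥ M.mulVec δ : ℚ) : ℝ)) := by
    intro M γ δ
    have : ((Matrix.vecMul γ S ⬝ᵥ M.mulVec δ : ℚ) : ℝ) =
        ∑ i, ((Matrix.vecMul γ S i : ℚ) : ℝ) * ((M.mulVec δ i : ℚ) : ℝ) := by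
      simp [dotProduct]
    rw [this, rpow_sum' hξ]
    exact Finset.prod_congr rfl fun i _ => (Real.rpow_mul hξ.le _ _).symm
  simp only [hterm]
  refine Fintype.sum_equiv (Equiv.inv W) _ _ fun B => ?_
  have hinv : (((B⁻¹ : W) : GL (Fin n) ℚ) : Matrix (Fin n) (Fin n) ℚ) =
      (((B : W) : GL (Fin n) ℚ) : Matrix (Fin n) (Fin n) ℚ)⁻¹ := by
    simp [Matrix.coe_units_inv]
  have hB2 : χ B * χ B = 1 := by have := hχ B; rwa [sq] at this
  have hχB : (χ B)⁻¹ = χ B := (eq_inv_of_mul_eq_one_left hB2).symm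
  have hχinv : χ B⁻¹ = χ B := by
    have h1 : χ B⁻¹ * χ B = 1 := by rw [← _root_.map_mul, inv_mul_cancel, _root_.map_one]
    rw [eq_inv_of_mul_eq_one_left h1, hχB]
  have hdet : IsUnit (((B : W) : GL (Fin n) ℚ) : Matrix (Fin n) (Fin n) ℚ).det :=
    (Matrix.isUnit_iff_isUnit_det _).mp ((B : GL (Fin n) ℚ)).isUnit
  simp only [Equiv.inv_apply, hinv, hχinv]
  rw [← key_dot S _ hdet (hS B) hSsymm β α]
end

section
/- The positive octant of the hypercross H(n, r) = {α ∈ ℕⁿ : Π_{i=1}^n (αᵢ + 1) ≤ r} is the union of all lower (downward-closed under componentwise addition) subsets of ℕⁿ of cardinality at most r. -/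
lemma box_ncard {n : ℕ} (α : Fin n → ℕ) :
    (Set.pi Set.univ fun i => Set.Iic (α i)).ncard = ∏ i, (α i + 1) := by
  rw [← Nat.card_coe_set_eq, Nat.card_congr (Equiv.Set.univPi _), Nat.card_pi]
  congr 1
  ext i
  simp [Nat.card_eq_fintype_card, Nat.card_Iic]

/-- The positive octant of the hypercross
`H(n, r) = {α ∈ ℕⁿ : ∏ᵢ (αᵢ + 1) ≤ r}` is the union of all lower
(downward-closed under componentwise addition) subsets of `ℕⁿ` of cardinality
at most `r`. -/
theorem hypercross_eq_union_lower_sets (n r : ℕ) :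
    {α : Fin n → ℕ | ∏ i, (α i + 1) ≤ r} =
      ⋃₀ {Γ : Set (Fin n → ℕ) |
        (∀ a b : Fin n → ℕ, a + b ∈ Γ → a ∈ Γ) ∧ Γ.Finite ∧ Γ.ncard ≤ r} := by
  ext α
  constructor
  · intro hα
    refine ⟨Set.pi Set.univ fun i => Set.Iic (α i), ⟨?_, ?_, ?_⟩, ?_⟩
    · intro a b hab i _
      exact le_trans (Nat.le_add_right _ _) (hab i (Set.mem_univ i))
    · exact Set.Finite.pi fun i => Set.finite_Iic _
    · rw [box_ncard]; exact hα
    · exact fun i _ => Set.mem_Iic.2 (le_refl (α i))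
  · rintro ⟨Γ, ⟨hlow, hfin, hcard⟩, hαΓ⟩
    have hsub : (Set.pi Set.univ fun i => Set.Iic (α i)) ⊆ Γ := by
      intro β hβ
      have : β + (α - β) = α := by
        funext i
        exact Nat.add_sub_cancel' (hβ i (Set.mem_univ i))
      have h2 : α ∈ Γ := hαΓ
      rw [← this] at h2
      exact hlow _ _ h2
    calc ∏ i, (α i + 1) = (Set.pi Set.univ fun i => Set.Iic (α i)).ncard :=
          (box_ncard α).symm
      _ ≤ Γ.ncard := Set.ncard_le_ncard hsub hfin
      _ ≤ r := hcard
end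

section
/- Let ζ₁,...,ζ_r be distinct points of (K*)ⁿ and a₁,...,a_r ∈ K* with K infinite (characteristic 0). Define the linear form Ω = Σᵢ aᵢ ev_{ζᵢ} on the Laurent polynomial ring K[x, x^{-1}]. Then the kernel of the associated Hankel operator, I = {p : Ω(pq) = 0 for all q}, is exactly the (radical) ideal of Laurent polynomials vanishing at all ζᵢ, and dim_K K[x,x^{-1}]/I = r. -/
/-!
Evaluations at distinct points of `(K*)ⁿ` are distinct `K`-algebra maps to `K`, so their
kernels are pairwise distinct maximal ideals and, by the Chinese remainder theorem,
`p ↦ (p(ζᵢ))ᵢ` maps `K[x, x⁻¹]` onto `Kʳ`. Testing `Ω(p q) = 0` against an interpolant `q`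
of the `i`-th indicator gives `aᵢ p(ζᵢ) = 0`; hence `I` is the kernel of this surjection
and `K[x, x⁻¹] ⧸ I ≅ Kʳ`.
-/

/-- Evaluation of a Laurent polynomial in `n` variables (an element of the monoid
algebra of `ℤⁿ` over `K`) at a point of `(K*)ⁿ`. -/
noncomputable def laurentEval {K : Type*} [Field K] {n : ℕ} (z : Fin n → Kˣ)
    (p : AddMonoidAlgebra K (Fin n → ℤ)) : K :=
  Finsupp.sum p.coeff fun α c => c * ∏ i, ((z i ^ α i : Kˣ) : K)

namespace AlgHom

variable {K A : Type*} [Field K] [CommRing A] [Algebra K A]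

theorem ker_isMaximal (f : A →ₐ[K] K) : (RingHom.ker f).IsMaximal :=
  RingHom.ker_isMaximal_of_surjective f fun c => ⟨algebraMap K A c, by simp⟩

theorem ker_injective : Function.Injective fun f : A →ₐ[K] K => RingHom.ker f := by
  intro f g hfg
  ext x
  have hx : x - algebraMap K A (f x) ∈ RingHom.ker f := by simp
  simp only at hfg
  rw [hfg, RingHom.mem_ker, map_sub, AlgHom.commutes, sub_eq_zero] at hx
  exact hx.symm

theorem surjective_pi_of_injective {ι : Type*} [_root_.Finite ι] {e : ι → A →ₐ[K] K}
    (he : Function.Injective e) : Function.Surjective (AlgHom.pi e) := by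
  intro v
  have hcoprime : Pairwise fun i j => IsCoprime (RingHom.ker (e i)) (RingHom.ker (e j)) :=
    fun i j hij =>
      have := (e i).ker_isMaximal
      have := (e j).ker_isMaximal
      Ideal.isCoprime_of_isMaximal (ker_injective.ne (he.ne hij))
  obtain ⟨p, hp⟩ := Ideal.exists_forall_sub_mem_ideal hcoprime fun i => algebraMap K A (v i)
  exact ⟨p, funext fun i => by simpa [sub_eq_zero] using hp i⟩

theorem forall_sum_mul_map_mul_eq_zero_iff {ι : Type*} [Fintype ι] {e : ι → A →ₐ[K] K}
    (he : Function.Injective e) {a : ι → K} (ha : ∀ i, a i ≠ 0) (p : A) :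
    (∀ q, ∑ i, a i * e i (p * q) = 0) ↔ ∀ i, e i p = 0 := by
  classical
  refine ⟨fun h i => ?_, fun h q => by simp [h]⟩
  obtain ⟨q, hq⟩ := surjective_pi_of_injective he (Pi.single i 1)
  have hqj : ∀ j, e j q = (Pi.single i 1 : ι → K) j := fun j => congr_fun hq j
  simpa [hqj, Pi.single_apply, ha i] using h q

theorem finrank_quotient_ker_pi {ι : Type*} [Fintype ι] {e : ι → A →ₐ[K] K}
    (he : Function.Injective e) :
    Module.finrank K (A ⧸ RingHom.ker (AlgHom.pi e)) = Fintype.card ι := by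
  rw [(Ideal.quotientKerAlgEquivOfSurjective
      (surjective_pi_of_injective he)).toLinearEquiv.finrank_eq,
    Module.finrank_fintype_fun_eq_card]

end AlgHom

section LaurentEval

variable {K : Type*} [Field K] {n : ℕ}

noncomputable def laurentEvalAlgHom (z : Fin n → Kˣ) :
    AddMonoidAlgebra K (Fin n → ℤ) →ₐ[K] K :=
  AddMonoidAlgebra.lift K K (Fin n → ℤ)
    { toFun := fun α => ∏ i, ((z i ^ α.toAdd i : Kˣ) : K)
      map_one' := by simp
      map_mul' := fun α β => by simp [zpow_add, Finset.prod_mul_distrib] }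

theorem laurentEvalAlgHom_apply (z : Fin n → Kˣ) (p : AddMonoidAlgebra K (Fin n → ℤ)) :
    laurentEvalAlgHom z p = laurentEval z p := by
  simp [laurentEvalAlgHom, AddMonoidAlgebra.lift_apply, laurentEval, smul_eq_mul]

theorem laurentEvalAlgHom_single (z : Fin n → Kˣ) (k : Fin n) :
    laurentEvalAlgHom z (AddMonoidAlgebra.single (Pi.single k 1) 1) = z k := by
  simp [laurentEvalAlgHom, Pi.single_apply]

theorem laurentEvalAlgHom_injective :
    Function.Injective (laurentEvalAlgHom : (Fin n → Kˣ) → _ →ₐ[K] K) := fun z w h =>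
  funext fun k => Units.ext <| by
    simpa only [laurentEvalAlgHom_single] using
      congr($h (AddMonoidAlgebra.single (Pi.single k 1) 1))

end LaurentEval

theorem hankel_kernel_eq_vanishing_ideal_general {K : Type*} [Field K] {n r : ℕ}
    (ζ : Fin r → Fin n → Kˣ) (hζ : Function.Injective ζ)
    (a : Fin r → K) (ha : ∀ i, a i ≠ 0)
    (Ω : AddMonoidAlgebra K (Fin n → ℤ) → K)
    (hΩ : ∀ p, Ω p = ∑ i, a i * laurentEval (ζ i) p)
    (I : Ideal (AddMonoidAlgebra K (Fin n → ℤ)))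
    (hI : ∀ p, p ∈ I ↔ ∀ q, Ω (p * q) = 0) :
    (∀ p, p ∈ I ↔ ∀ i, laurentEval (ζ i) p = 0) ∧
      Module.finrank K (AddMonoidAlgebra K (Fin n → ℤ) ⧸ I) = r := by
  set e := fun i => laurentEvalAlgHom (ζ i)
  have he : Function.Injective e := laurentEvalAlgHom_injective.comp hζ
  have hmem : ∀ p, p ∈ I ↔ ∀ i, laurentEval (ζ i) p = 0 := fun p => by
    simpa [hI, hΩ, e, laurentEvalAlgHom_apply] using
      AlgHom.forall_sum_mul_map_mul_eq_zero_iff he ha p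
  have hker : I = RingHom.ker (AlgHom.pi e) := by
    ext p
    simp [hmem, funext_iff, e, laurentEvalAlgHom_apply]
  refine ⟨hmem, ?_⟩
  rw [hker, AlgHom.finrank_quotient_ker_pi he, Fintype.card_fin]

/-- Let `ζ₁,…,ζ_r` be distinct points of `(K*)ⁿ`, `a₁,…,a_r ∈ K*`, and
`Ω = ∑ᵢ aᵢ ev_{ζᵢ}` the associated linear form on the Laurent polynomial ring.
Then the kernel `I = {p : Ω(pq) = 0 ∀q}` of the associated Hankel operator is exactly
the (radical) ideal of Laurent polynomials vanishing at all the `ζᵢ`, and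
`dim_K K[x,x⁻¹]/I = r`. -/
theorem hankel_kernel_eq_vanishing_ideal {K : Type*} [Field K] [CharZero K] {n r : ℕ}
    (ζ : Fin r → Fin n → Kˣ) (hζ : Function.Injective ζ)
    (a : Fin r → K) (ha : ∀ i, a i ≠ 0)
    (Ω : AddMonoidAlgebra K (Fin n → ℤ) → K)
    (hΩ : ∀ p, Ω p = ∑ i, a i * laurentEval (ζ i) p)
    (I : Ideal (AddMonoidAlgebra K (Fin n → ℤ)))
    (hI : ∀ p, p ∈ I ↔ ∀ q, Ω (p * q) = 0) :
    (∀ p, p ∈ I ↔ ∀ i, laurentEval (ζ i) p = 0) ∧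
      Module.finrank K (AddMonoidAlgebra K (Fin n → ℤ) ⧸ I) = r :=
  hankel_kernel_eq_vanishing_ideal_general ζ hζ a ha Ω hΩ I hI
end

section
/- Let Ω be a linear form on a commutative K-algebra S whose Hankel operator p ↦ (q ↦ Ω(pq)) has finite rank r, with kernel ideal I. For subsets B = {b₁,...,b_r}, C = {c₁,...,c_r} of S, the images of B and C in S/I are both bases of S/I if and only if the r×r matrix H = (Ω(cᵢ bⱼ)) is nonsingular. -/
/-- Let `Ω` be a linear form on a commutative `K`-algebra `S` whose Hankel operator
`H : p ↦ (q ↦ Ω(pq))` has finite rank `r`, with kernel ideal `I`. For tuples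
`B = (b₁,…,b_r)` and `C = (c₁,…,c_r)` in `S`, the images of `B` and `C` in `S/I`
are both bases of `S/I` if and only if the `r×r` matrix `(Ω(cᵢ bⱼ))` is
nonsingular. -/
theorem hankel_basis_iff_matrix_nonsingular {K S : Type*} [Field K] [CommRing S]
    [Algebra K S] {r : ℕ}
    (Ω : S →ₗ[K] K)
    (H : S →ₗ[K] (S →ₗ[K] K)) (hH : ∀ p q, H p q = Ω (p * q))
    (hfin : Module.Finite K (LinearMap.range H))
    (hrank : Module.finrank K (LinearMap.range H) = r)
    (I : Ideal S) (hI : ∀ p, p ∈ I ↔ ∀ q, Ω (p * q) = 0)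
    (b c : Fin r → S) :
    ((LinearIndependent K (fun j => Ideal.Quotient.mk I (b j)) ∧
        Submodule.span K (Set.range fun j => Ideal.Quotient.mk I (b j)) = ⊤) ∧
      (LinearIndependent K (fun i => Ideal.Quotient.mk I (c i)) ∧
        Submodule.span K (Set.range fun i => Ideal.Quotient.mk I (c i)) = ⊤)) ↔
      (Matrix.of fun i j => Ω (c i * b j)).det ≠ 0 := by
  classical
  set M : Matrix (Fin r) (Fin r) K := Matrix.of fun i j => Ω (c i * b j) with hMdef
  let φ : S →ₗ[K] S ⧸ I := (Ideal.Quotient.mkₐ K I).toLinearMap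
  have hφ : ∀ s : S, φ s = Ideal.Quotient.mk I s := fun s => rfl
  have key : ∀ (f : Fin r → S) (v : Fin r → K),
      ∑ j, v j • Ideal.Quotient.mk I (f j) = Ideal.Quotient.mk I (∑ j, v j • f j) := by
    intro f v
    simp only [← hφ, ← map_smul, ← map_sum]
  -- dimension facts
  have hker : LinearMap.ker H = Submodule.restrictScalars K I := by
    ext p
    simp only [LinearMap.mem_ker, Submodule.restrictScalars_mem, hI p]
    constructor
    · intro h q
      rw [← hH, h]
      rfl
    · intro h
      ext q
      rw [hH]
      exact h q
  have e : (S ⧸ I) ≃ₗ[K] LinearMap.range H :=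
    (Submodule.Quotient.restrictScalarsEquiv K I).symm.trans
      (hker ▸ H.quotKerEquivRange)
  haveI hfd : FiniteDimensional K (S ⧸ I) := Module.Finite.equiv e.symm
  have hdim : Module.finrank K (S ⧸ I) = r := by rw [e.finrank_eq, hrank]
  constructor
  · rintro ⟨⟨hbind, _⟩, ⟨_, hcsp⟩⟩
    intro hdet0
    obtain ⟨v, hv0, hMv⟩ := (Matrix.exists_mulVec_eq_zero_iff).2 hdet0
    set p : S := ∑ j, v j • b j with hpdef
    have hCp : ∀ i, Ω (c i * p) = 0 := by
      intro i
      have := congrFun hMv i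
      simpa [hpdef, M, Matrix.mulVec, dotProduct, Finset.mul_sum,
        mul_smul_comm, map_sum, map_smul, smul_eq_mul, mul_comm] using this
    have hpI : p ∈ I := by
      rw [hI]
      intro q
      have hq : (Ideal.Quotient.mk I q) ∈
          Submodule.span K (Set.range fun i => Ideal.Quotient.mk I (c i)) := by
        rw [hcsp]; trivial
      obtain ⟨a, ha⟩ := (Submodule.mem_span_range_iff_exists_fun K).1 hq
      rw [key] at ha
      set w : S := ∑ i, a i • c i with hwdef
      have hqw : q - w ∈ I := by
        rw [← Ideal.Quotient.eq_zero_iff_mem, ← hφ, map_sub, hφ, hφ, ha, sub_self]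
      have h1 : Ω (p * (q - w)) = 0 := by
        rw [mul_comm]
        exact (hI _).1 hqw p
      have h2 : Ω (p * w) = 0 := by
        have hw : p * w = ∑ i, a i • (c i * p) := by
          rw [hwdef, Finset.mul_sum]
          exact Finset.sum_congr rfl fun i _ => by
            rw [mul_smul_comm, mul_comm]
        rw [hw, map_sum]
        simp [map_smul, hCp]
      have : p * q = p * (q - w) + p * w := by ring
      rw [this, map_add, h1, h2, add_zero]
    have hz : ∑ j, v j • Ideal.Quotient.mk I (b j) = 0 := by
      rw [key, ← hpdef, Ideal.Quotient.eq_zero_iff_mem]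
      exact hpI
    exact hv0 (funext fun j => Fintype.linearIndependent_iff.1 hbind v hz j)
  · intro hdet
    have hinv : ∀ (N : Matrix (Fin r) (Fin r) K), N.det ≠ 0 →
        ∀ v : Fin r → K, N.mulVec v = 0 → v = 0 := by
      intro N hN v hv
      have h1 : N⁻¹ * N = 1 := Matrix.nonsing_inv_mul N (isUnit_iff_ne_zero.2 hN)
      calc v = (N⁻¹ * N).mulVec v := by rw [h1, Matrix.one_mulVec]
        _ = N⁻¹.mulVec (N.mulVec v) := (Matrix.mulVec_mulVec _ _ _).symm
        _ = 0 := by rw [hv, Matrix.mulVec_zero]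
    have hbind : LinearIndependent K (fun j => Ideal.Quotient.mk I (b j)) := by
      rw [Fintype.linearIndependent_iff]
      intro v hv
      have hp : (∑ j, v j • b j) ∈ I := by
        rw [← Ideal.Quotient.eq_zero_iff_mem, ← key]
        exact hv
      have hMv : M.mulVec v = 0 := by
        funext i
        have h0 := (hI _).1 hp (c i)
        have : Ω (∑ j, v j • (b j * c i)) = 0 := by
          rw [← h0]
          congr 1
          rw [Finset.sum_mul]
          exact Finset.sum_congr rfl fun j _ => (smul_mul_assoc _ _ _).symm
        rw [map_sum] at this
        simpa [M, Matrix.mulVec, dotProduct, smul_eq_mul, mul_comm] using this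
      intro j
      have := hinv M hdet v hMv
      rw [this]; rfl
    have hcind : LinearIndependent K (fun i => Ideal.Quotient.mk I (c i)) := by
      rw [Fintype.linearIndependent_iff]
      intro v hv
      have hp : (∑ i, v i • c i) ∈ I := by
        rw [← Ideal.Quotient.eq_zero_iff_mem, ← key]
        exact hv
      have hMv : M.transpose.mulVec v = 0 := by
        funext j
        have h0 := (hI _).1 hp (b j)
        have : Ω (∑ i, v i • (c i * b j)) = 0 := by
          rw [← h0]
          congr 1
          rw [Finset.sum_mul]
          exact Finset.sum_congr rfl fun i _ => (smul_mul_assoc _ _ _).symm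
        rw [map_sum] at this
        simpa [M, Matrix.mulVec, dotProduct, Matrix.transpose, smul_eq_mul,
          mul_comm] using this
      have hdetT : M.transpose.det ≠ 0 := by rwa [Matrix.det_transpose]
      intro i
      have := hinv M.transpose hdetT v hMv
      rw [this]; rfl
    have hcard : Fintype.card (Fin r) = Module.finrank K (S ⧸ I) := by
      rw [Fintype.card_fin, hdim]
    exact ⟨⟨hbind, hbind.span_eq_top_of_card_eq_finrank' hcard⟩,
      ⟨hcind, hcind.span_eq_top_of_card_eq_finrank' hcard⟩⟩
end

section
/- With Ω, I, r as above and B, C bases of S/I, the matrix of multiplication by p ∈ S on S/I in basis B is M_p^B = (H₁)^{-1} H_p, where H₁ = (Ω(cᵢ bⱼ)) and H_p = (Ω(cᵢ bⱼ p)). -/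
/-- Let `Ω` be a linear form on a commutative `K`-algebra `S` whose Hankel operator
`H : p ↦ (q ↦ Ω(pq))` has finite rank `r` with kernel ideal `I`, and let `B`, `C`
map to bases of `S/I`. Then the matrix of multiplication by `p ∈ S` on `S/I` in the
basis `B` is `M_p = H₁⁻¹ H_p`, where `H₁ = (Ω(cᵢ bⱼ))` and `H_p = (Ω(cᵢ bⱼ p))`. -/
theorem multiplication_matrix_eq_hankel_quotient {K S : Type*} [Field K] [CommRing S]
    [Algebra K S] {r : ℕ}
    (Ω : S →ₗ[K] K)
    (H : S →ₗ[K] (S →ₗ[K] K)) (hH : ∀ p q, H p q = Ω (p * q))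
    (hfin : Module.Finite K (LinearMap.range H))
    (hrank : Module.finrank K (LinearMap.range H) = r)
    (I : Ideal S) (hI : ∀ p, p ∈ I ↔ ∀ q, Ω (p * q) = 0)
    (b c : Fin r → S)
    (hb : LinearIndependent K (fun j => Ideal.Quotient.mk I (b j)) ∧
      Submodule.span K (Set.range fun j => Ideal.Quotient.mk I (b j)) = ⊤)
    (hc : LinearIndependent K (fun i => Ideal.Quotient.mk I (c i)) ∧
      Submodule.span K (Set.range fun i => Ideal.Quotient.mk I (c i)) = ⊤)
    (p : S) (M : Matrix (Fin r) (Fin r) K)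
    (hM : ∀ j, Ideal.Quotient.mk I (p * b j) = ∑ i, M i j • Ideal.Quotient.mk I (b i)) :
    M = (Matrix.of fun i j => Ω (c i * b j))⁻¹ *
      (Matrix.of fun i j => Ω (c i * b j * p)) := by
  classical
  have mk_smul : ∀ (a : K) (x : S),
      Ideal.Quotient.mk I (a • x) = a • Ideal.Quotient.mk I x := fun a x => by
    rw [← Ideal.Quotient.mkₐ_eq_mk K I]
    exact map_smul (Ideal.Quotient.mkₐ K I) a x
  set H₁ : Matrix (Fin r) (Fin r) K := Matrix.of (fun i j => Ω (c i * b j)) with hH₁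
  -- p * b j - ∑ i, M i j • b i ∈ I
  have hmem : ∀ j, p * b j - ∑ i, M i j • b i ∈ I := by
    intro j
    rw [← Ideal.Quotient.eq_zero_iff_mem, map_sub, map_sum, sub_eq_zero, hM j]
    exact Finset.sum_congr rfl fun i _ => (mk_smul _ _).symm
  -- H₁ is invertible
  have hdet : H₁.det ≠ 0 := by
    intro h0
    obtain ⟨v, hv, hmv⟩ := Matrix.exists_mulVec_eq_zero_iff.mpr h0
    set s : S := ∑ j, v j • b j with hs
    have hΩ : ∀ i, Ω (c i * s) = 0 := by
      intro i
      have h := congrFun hmv i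
      have : Ω (c i * s) = ∑ j, H₁ i j * v j := by
        rw [hs, Finset.mul_sum, map_sum]
        exact Finset.sum_congr rfl fun j _ => by
          rw [mul_smul_comm, map_smul, smul_eq_mul, mul_comm]; rfl
      rw [this]
      simpa [Matrix.mulVec, dotProduct] using h
    have hsI : s ∈ I := by
      rw [hI]
      intro q
      have hq : Ideal.Quotient.mk I q ∈ Submodule.span K
          (Set.range fun i => Ideal.Quotient.mk I (c i)) := by
        rw [hc.2]; trivial
      obtain ⟨a, ha⟩ := Submodule.mem_span_range_iff_exists_fun K |>.mp hq
      have hqI : q - ∑ i, a i • c i ∈ I := by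
        rw [← Ideal.Quotient.eq_zero_iff_mem, map_sub, map_sum, sub_eq_zero, ← ha]
        exact (Finset.sum_congr rfl fun i _ => mk_smul _ _).symm
      have h0 := (hI _).mp hqI s
      have hrw : (q - ∑ i, a i • c i) * s = s * q - (∑ i, a i • c i) * s := by ring
      rw [hrw, map_sub, sub_eq_zero] at h0
      rw [h0, Finset.sum_mul, map_sum]
      refine Finset.sum_eq_zero fun i _ => ?_
      rw [smul_mul_assoc, map_smul, hΩ i, smul_zero]
    have hmk : (∑ j, v j • Ideal.Quotient.mk I (b j)) = 0 := by
      rw [← Ideal.Quotient.eq_zero_iff_mem] at hsI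
      rw [← hsI, hs, map_sum]
      exact Finset.sum_congr rfl fun j _ => (mk_smul _ _).symm
    exact hv (funext (Fintype.linearIndependent_iff.mp hb.1 v hmk))
  -- key identity
  have key : H₁ * M = Matrix.of (fun i j => Ω (c i * b j * p)) := by
    ext i j
    have h0 := (hI _).mp (hmem j) (c i)
    have h1 : Ω (c i * (p * b j)) = Ω (c i * ∑ k, M k j • b k) := by
      have : (p * b j - ∑ k, M k j • b k) * c i
          = c i * (p * b j) - c i * (∑ k, M k j • b k) := by ring
      rw [this, map_sub, sub_eq_zero] at h0
      exact h0
    have h2 : Ω (c i * ∑ k, M k j • b k) = ∑ k, H₁ i k * M k j := by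
      rw [Finset.mul_sum, map_sum]
      exact Finset.sum_congr rfl fun k _ => by
        rw [mul_smul_comm, map_smul, smul_eq_mul, mul_comm]; rfl
    have h3 : Ω (c i * b j * p) = ∑ k, H₁ i k * M k j := by
      rw [← h2, ← h1]; ring_nf
    show ∑ k, H₁ i k * M k j = Ω (c i * b j * p)
    rw [h3]
  calc M = H₁⁻¹ * (H₁ * M) := by
        rw [← Matrix.mul_assoc, Matrix.nonsing_inv_mul _ (isUnit_iff_ne_zero.mpr hdet), Matrix.one_mul]
    _ = _ := by rw [key]
end
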